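/- Fix a period L > 0, parameters d, α > 0 and admissible nonlinearities f₁, f₂ with zeros a₁, a₂. Let e be a segregated stationary equilibrium and let 𝒵 = e⁻¹({0}). Then: (i) 𝒵 is a discrete set (every point of 𝒵 is isolated in ℝ); (ii) if 𝒵 is finite, then its cardinality is odd; (iii) 𝒵 admits either a minimum or a maximum. -/

import Mathlib

open MeasureTheory Set Filter Topology Function

noncomputable section

/-- An admissible nonlinearity with period `L` and zero `a`:
`f` is `C¹`, `L`-periodic in its second variable, positive at `u = 0` uniformly in `x`,
decreasing in its first variable, and vanishes at `u = a` for all `x`. -/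
structure Admissible (L : ℝ) (f : ℝ → ℝ → ℝ) (a : ℝ) : Prop where
  smooth : ContDiff ℝ 1 (uncurry f)
  periodic : ∀ u x, f u (x + L) = f u x
  pos_at_zero : ∃ m > 0, ∀ x, m ≤ f 0 x
  strict_anti : ∀ x, StrictAnti (fun u => f u x)
  zero_pos : 0 < a
  zero_root : ∀ x, f a x = 0

/-- `Zfun s φ t x = φ (x - s t, x)`. -/
def Zfun (s : ℝ) (φ : ℝ → ℝ → ℝ) : ℝ → ℝ → ℝ := fun t x => φ (x - s * t) x

/-- A regular segregated pulsating front with speed `s` and profile `φ`. -/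
structure SegFront (L d α a₁ a₂ : ℝ) (f₁ f₂ : ℝ → ℝ → ℝ) (s : ℝ)
    (φ : ℝ → ℝ → ℝ) : Prop where
  cont : Continuous (uncurry φ)
  bdd : ∃ M, ∀ ξ x, |φ ξ x| ≤ M
  per : ∀ ξ x, φ ξ (x + L) = φ ξ x
  mono : ∀ x, Antitone (fun ξ => φ ξ x)
  pos : ∃ ξ x, 0 < φ ξ x
  neg : ∃ ξ x, φ ξ x < 0
  lim_left : ∀ ε > 0, ∃ M, ∀ ξ, M ≤ ξ → ∀ x ∈ Icc (0:ℝ) L, |φ (-ξ) x - α * a₁| < ε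
  lim_right : ∀ ε > 0, ∃ M, ∀ ξ, M ≤ ξ → ∀ x ∈ Icc (0:ℝ) L, |φ ξ x + d * a₂| < ε
  pde : ∃ zt zx zxx : ℝ → ℝ → ℝ,
    (∀ t x, Zfun s φ t x ≠ 0 → HasDerivAt (fun τ => Zfun s φ τ x) (zt t x) t) ∧
    (∀ t x, Zfun s φ t x ≠ 0 → HasDerivAt (fun y => Zfun s φ t y) (zx t x) x) ∧
    (∀ t x, Zfun s φ t x ≠ 0 → HasDerivAt (fun y => zx t y) (zxx t x) x) ∧
    ContinuousOn (uncurry zt) {p : ℝ × ℝ | Zfun s φ p.1 p.2 ≠ 0} ∧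
    ContinuousOn (uncurry zx) {p : ℝ × ℝ | Zfun s φ p.1 p.2 ≠ 0} ∧
    ContinuousOn (uncurry zxx) {p : ℝ × ℝ | Zfun s φ p.1 p.2 ≠ 0} ∧
    (∀ t x, 0 < Zfun s φ t x →
      zt t x = zxx t x + Zfun s φ t x * f₁ (Zfun s φ t x / α) x) ∧
    (∀ t x, Zfun s φ t x < 0 →
      zt t x = d * zxx t x + Zfun s φ t x * f₂ (-(Zfun s φ t x) / d) x)

/-- The limiting nonlinearity `η(z, x)`. -/
def eta (d α : ℝ) (f₁ f₂ : ℝ → ℝ → ℝ) (z x : ℝ) : ℝ :=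
  f₁ (z / α) x * max z 0 - (1 / d) * f₂ (-z / d) x * (-(min z 0))

/-- A segregated stationary equilibrium. -/
structure SegEquilibrium (L d α : ℝ) (f₁ f₂ : ℝ → ℝ → ℝ) (e : ℝ → ℝ) : Prop where
  smooth : ContDiff ℝ 2 e
  bdd : ∃ M, ∀ x, |e x| ≤ M
  ode : ∀ x, -(deriv (deriv e) x) = eta d α f₁ f₂ (e x) x
  mono : ∀ x, Antitone (fun n : ℕ => e (x + n * L))
  pos : ∃ x, 0 < e x
  neg : ∃ x, e x < 0
  tail : BddBelow {x | e x < 0} ∨ BddAbove {x | 0 < e x}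

/-- The Du–Lin solution on `[x₀, ∞)`: bounded, nonnegative, nonzero, `C²`, vanishing
at `x₀`, solving `-z'' = z f(z, ·)` on `(x₀, ∞)`. -/
structure IsDuLin (x₀ : ℝ) (f : ℝ → ℝ → ℝ) (z : ℝ → ℝ) : Prop where
  diff1 : ∀ x ∈ Ici x₀, DifferentiableWithinAt ℝ z (Ici x₀) x
  diff2 : ∀ x ∈ Ici x₀,
    DifferentiableWithinAt ℝ (derivWithin z (Ici x₀)) (Ici x₀) x
  cont2 : ContinuousOn (derivWithin (derivWithin z (Ici x₀)) (Ici x₀)) (Ici x₀)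
  bdd : ∃ M, ∀ x ∈ Ici x₀, |z x| ≤ M
  nonneg : ∀ x ∈ Ici x₀, 0 ≤ z x
  nonzero : ∃ x ∈ Ici x₀, z x ≠ 0
  zero_at : z x₀ = 0
  ode : ∀ x ∈ Ioi x₀,
    -(derivWithin (derivWithin z (Ici x₀)) (Ici x₀) x) = z x * f (z x) x

/-- `∂ₜ` of a function of `(t, x)`. -/
def dT (u : ℝ → ℝ → ℝ) (t x : ℝ) : ℝ := deriv (fun τ => u τ x) t

/-- `∂ₓ` of a function of `(t, x)` (or of `(ξ, x)`). -/
def dX (u : ℝ → ℝ → ℝ) (t x : ℝ) : ℝ := deriv (fun y => u t y) x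

/-- `∂ₓₓ` of a function of `(t, x)`. -/
def dXX (u : ℝ → ℝ → ℝ) (t x : ℝ) : ℝ := deriv (fun y => dX u t y) x

/-- `∂_ξ` of a profile. -/
def dXi (φ : ℝ → ℝ → ℝ) (ξ x : ℝ) : ℝ := deriv (fun ζ => φ ζ x) ξ

/-- A pulsating front of the competition system `(P_k)`. -/
structure PkFront (L d α k a₁ a₂ : ℝ) (f₁ f₂ : ℝ → ℝ → ℝ) (c : ℝ)
    (φ₁ φ₂ : ℝ → ℝ → ℝ) : Prop where
  smooth1 : ContDiff ℝ 2 (uncurry φ₁)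
  smooth2 : ContDiff ℝ 2 (uncurry φ₂)
  per1 : ∀ ξ x, φ₁ ξ (x + L) = φ₁ ξ x
  per2 : ∀ ξ x, φ₂ ξ (x + L) = φ₂ ξ x
  mono1 : ∀ x, Antitone (fun ξ => φ₁ ξ x)
  mono2 : ∀ x, Monotone (fun ξ => φ₂ ξ x)
  pde1 : ∀ t x, dT (Zfun c φ₁) t x =
      dXX (Zfun c φ₁) t x + Zfun c φ₁ t x * f₁ (Zfun c φ₁ t x) x
        - k * Zfun c φ₁ t x * Zfun c φ₂ t x
  pde2 : ∀ t x, dT (Zfun c φ₂) t x =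
      d * dXX (Zfun c φ₂) t x + Zfun c φ₂ t x * f₂ (Zfun c φ₂ t x) x
        - α * k * Zfun c φ₁ t x * Zfun c φ₂ t x
  lim_left : ∀ ε > 0, ∃ M, ∀ ξ, ξ ≤ M → ∀ x ∈ Icc (0:ℝ) L,
      |φ₁ ξ x - a₁| < ε ∧ |φ₂ ξ x| < ε
  lim_right : ∀ ε > 0, ∃ M, ∀ ξ, M ≤ ξ → ∀ x ∈ Icc (0:ℝ) L,
      |φ₁ ξ x| < ε ∧ |φ₂ ξ x - a₂| < ε

/-- A positive pulsating front for the scalar equation `∂ₜ z = δ ∂ₓₓ z + z g(z, x)`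
connecting `a` to `0` at speed `s`. -/
structure ScalarFront (L δ a : ℝ) (g : ℝ → ℝ → ℝ) (s : ℝ) (ψ : ℝ → ℝ → ℝ) : Prop where
  smooth : ContDiff ℝ 2 (uncurry ψ)
  per : ∀ ξ x, ψ ξ (x + L) = ψ ξ x
  pos : ∀ ξ x, 0 < ψ ξ x
  pde : ∀ t x, dT (Zfun s ψ) t x =
      δ * dXX (Zfun s ψ) t x + Zfun s ψ t x * g (Zfun s ψ t x) x
  lim_left : ∀ ε > 0, ∃ M, ∀ ξ, ξ ≤ M → ∀ x ∈ Icc (0:ℝ) L, |ψ ξ x - a| < ε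
  lim_right : ∀ ε > 0, ∃ M, ∀ ξ, M ≤ ξ → ∀ x ∈ Icc (0:ℝ) L, |ψ ξ x| < ε

/-- `σ(v) = 1` if `v > 0`, `1/d` if `v < 0` (the value at `0` is irrelevant). -/
def sigmaFun (d v : ℝ) : ℝ := if 0 < v then 1 else if v < 0 then 1 / d else 0

/-- Extra regularity of a segregated pulsating front (established in the paper):
`z = Zfun s φ` is everywhere differentiable in `x` with `∂ₓ z` continuous on `ℝ²` and
negative on the zero set of `z`, and `∂ₜ z` exists off the zero set and has there the
strict sign of `s`. -/
def FrontRegular (s : ℝ) (φ zt zx : ℝ → ℝ → ℝ) : Prop :=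
  (∀ t x, HasDerivAt (fun y => Zfun s φ t y) (zx t x) x) ∧
  Continuous (uncurry zx) ∧
  (∀ t x, Zfun s φ t x = 0 → zx t x < 0) ∧
  (∀ t x, Zfun s φ t x ≠ 0 → HasDerivAt (fun τ => Zfun s φ τ x) (zt t x) t) ∧
  (0 < s → ∀ t x, Zfun s φ t x ≠ 0 → 0 < zt t x) ∧
  (s < 0 → ∀ t x, Zfun s φ t x ≠ 0 → zt t x < 0)

/-!
Periodicity bounds `f₁, f₂` on bounded sets, so `|e''| = |η(e, x)| ≤ C |e|`, and Grönwall's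
inequality for `(e, e')` shows that a zero where `e'` also vanishes forces `e ≡ 0`. Hence every
zero is simple: it is isolated and `e` changes sign there. Shifting by periods, `e > 0`
somewhere left of any point and `e < 0` somewhere right of it, so finitely many sign changes
from `+` to `-` are odd in number. If `{e < 0}` is bounded below by `b`, a zero left of `b`
would be a local minimum of `e`; so the closed zero set is bounded below and has a least
element, and symmetrically a greatest one when `{e > 0}` is bounded above.
-/

theorem eq_zero_of_norm_deriv_le_mul_norm_self {E : Type*} [NormedAddCommGroup E]
    [NormedSpace ℝ E] {f f' : ℝ → E} {K a : ℝ} (hf : ∀ x, HasDerivAt f (f' x) x)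
    (bound : ∀ x, ‖f' x‖ ≤ K * ‖f x‖) (ha : f a = 0) (x : ℝ) : f x = 0 := by
  have hcont : Continuous f := continuous_iff_continuousAt.2 fun x => (hf x).continuousAt
  rcases le_total a x with hax | hxa
  · exact eq_zero_of_abs_deriv_le_mul_abs_self_of_eq_zero_right hcont.continuousOn
      (fun y _ => (hf y).hasDerivWithinAt) ha (fun y _ => bound y) x ⟨hax, le_rfl⟩
  · have hrefl : ∀ y, HasDerivAt (fun y => f (-y)) (-f' (-y)) y := fun y => by
      simpa [Function.comp_def] using (hf (-y)).scomp y (hasDerivAt_neg y)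
    simpa using eq_zero_of_abs_deriv_le_mul_abs_self_of_eq_zero_right
      (hcont.comp continuous_neg).continuousOn (fun y _ => (hrefl y).hasDerivWithinAt)
      (by simpa using ha) (fun y _ => by simpa using bound (-y)) (-x) ⟨neg_le_neg hxa, le_rfl⟩

theorem eq_zero_of_abs_deriv_deriv_le {u : ℝ → ℝ} (hu : Differentiable ℝ u)
    (hu' : Differentiable ℝ (deriv u)) {C : ℝ} (bound : ∀ x, |deriv (deriv u) x| ≤ C * |u x|)
    {a : ℝ} (ha : u a = 0) (ha' : deriv u a = 0) (x : ℝ) : u x = 0 := by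
  have hK : ∀ y, ‖(deriv u y, deriv (deriv u) y)‖ ≤ max 1 C * ‖(u y, deriv u y)‖ := fun y => by
    simp only [Prod.norm_mk, Real.norm_eq_abs]
    have h₁ : |u y| ≤ max |u y| |deriv u y| := le_max_left _ _
    have h₂ : |deriv u y| ≤ max |u y| |deriv u y| := le_max_right _ _
    have hC : C ≤ max 1 C := le_max_right _ _
    have hone : 1 ≤ max 1 C := le_max_left _ _
    refine max_le ?_ ?_ <;> nlinarith [bound y, abs_nonneg (u y), abs_nonneg (deriv u y)]
  have := eq_zero_of_norm_deriv_le_mul_norm_self (f := fun y => (u y, deriv u y))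
    (fun y => (hu y).hasDerivAt.prodMk (hu' y).hasDerivAt) hK (a := a) (by simp [ha, ha']) x
  exact congrArg Prod.fst this

theorem HasDerivAt.exists_forall_eq_imp_eq {f : ℝ → ℝ} {f' x : ℝ} (hf : HasDerivAt f f' x)
    (hf' : f' ≠ 0) : ∃ ε > 0, ∀ y, f y = f x → |y - x| < ε → y = x := by
  obtain ⟨ε, hε, H⟩ := Metric.eventually_nhds_iff.1 (eventually_nhdsWithin_iff.1
    (hf.eventually_ne (c := f x) hf'))
  exact ⟨ε, hε, fun y hy hyx => not_not.1 fun hne => H (by rwa [Real.dist_eq]) hne hy⟩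

theorem mul_pos_of_forall_ne_zero {u : ℝ → ℝ} (hu : Continuous u) {a b : ℝ} (hab : a ≤ b)
    (h : ∀ z ∈ Icc a b, u z ≠ 0) : 0 < u a * u b := by
  by_contra! hneg
  have h0 : (0 : ℝ) ∈ uIcc (u a) (u b) := by
    rcases (h a ⟨le_rfl, hab⟩).lt_or_gt with ha | ha
    · exact mem_uIcc.2 (Or.inl ⟨ha.le, by nlinarith⟩)
    · exact mem_uIcc.2 (Or.inr ⟨by nlinarith, ha.le⟩)
  obtain ⟨z, hz, hz0⟩ := intermediate_value_uIcc hu.continuousOn h0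
  exact h z (uIcc_of_le hab ▸ hz) hz0

theorem mul_neg_of_zeros_eq_singleton {u : ℝ → ℝ} (hu : Continuous u)
    (hext : ∀ z, u z = 0 → ¬IsLocalExtr u z) {a b m : ℝ} (ha : u a ≠ 0) (hb : u b ≠ 0)
    (hm : Ioo a b ∩ {z | u z = 0} = {m}) : u a * u b < 0 := by
  have hm' : m ∈ Ioo a b ∩ {z | u z = 0} := hm ▸ rfl
  have hm0 : u m = 0 := hm'.2
  have hzero : ∀ z ∈ Ioo a b, u z = 0 → z = m := fun z hz hz0 => by
    have : z ∈ ({m} : Set ℝ) := hm ▸ ⟨hz, hz0⟩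
    exact this
  have hleft : ∀ y ∈ Ico a m, 0 < u a * u y := fun y hy =>
    mul_pos_of_forall_ne_zero hu hy.1 fun z hz hz0 => by
      rcases hz.1.eq_or_lt with rfl | haz
      · exact ha hz0
      · exact (hz.2.trans_lt hy.2).ne (hzero z ⟨haz, hz.2.trans_lt (hy.2.trans hm'.1.2)⟩ hz0)
  have hright : ∀ y ∈ Ioc m b, 0 < u y * u b := fun y hy =>
    mul_pos_of_forall_ne_zero hu hy.2 fun z hz hz0 => by
      rcases hz.2.eq_or_lt with rfl | hzb
      · exact hb hz0
      · exact (hy.1.trans_le hz.1).ne' (hzero z ⟨(hm'.1.1.trans hy.1).trans_le hz.1, hzb⟩ hz0)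
  refine lt_of_le_of_ne (not_lt.1 fun hab => ?_) (mul_ne_zero ha hb)
  -- `u` has the sign of `u a` on both sides of `m`, which makes `m` a local extremum
  have hsign : ∀ y ∈ Ioo a b, 0 ≤ u a * u y := by
    intro y hy
    rcases lt_trichotomy y m with hym | rfl | hmy
    · exact (hleft y ⟨hy.1.le, hym⟩).le
    · rw [hm0, mul_zero]
    · have := hright y ⟨hmy, hy.2.le⟩
      have : 0 < u a * u y * (u b * u b) := by nlinarith
      exact (pos_of_mul_pos_left this (mul_self_nonneg _)).le
  have hnhds : Ioo a b ∈ 𝓝 m := Ioo_mem_nhds hm'.1.1 hm'.1.2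
  apply hext m hm0
  rcases ha.lt_or_gt with ha' | ha'
  · exact IsMaxFilter.isExtr <| Filter.mem_of_superset hnhds fun y hy => by
      simp only [mem_ofPred_eq, hm0]; nlinarith [hsign y hy]
  · exact IsMinFilter.isExtr <| Filter.mem_of_superset hnhds fun y hy => by
      simp only [mem_ofPred_eq, hm0]; nlinarith [hsign y hy]

theorem ncard_inter_Ioo_add_ncard_inter_Ioo {s : Set ℝ} {a b c : ℝ} (hac : a < c) (hcb : c < b)
    (hc : c ∉ s) (hfin : (Ioo a b ∩ s).Finite) :
    (Ioo a c ∩ s).ncard + (Ioo c b ∩ s).ncard = (Ioo a b ∩ s).ncard := by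
  have hsplit : Ioo a b ∩ s = (Ioo a c ∩ s) ∪ (Ioo c b ∩ s) := by
    ext z
    simp only [mem_union, mem_inter_iff, mem_Ioo]
    rcases lt_trichotomy z c with h | rfl | h <;> grind
  rw [hsplit] at hfin ⊢
  exact (ncard_union_eq (disjoint_left.2 fun z h₁ h₂ => lt_asymm h₁.1.2 h₂.1.1)
    (hfin.subset subset_union_left) (hfin.subset subset_union_right)).symm

theorem neg_one_pow_ncard_zeros_mul_pos {u : ℝ → ℝ} (hu : Continuous u)
    (hext : ∀ z, u z = 0 → ¬IsLocalExtr u z) (n : ℕ) :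
    ∀ a b, a ≤ b → u a ≠ 0 → u b ≠ 0 → (Ioo a b ∩ {z | u z = 0}).Finite →
      (Ioo a b ∩ {z | u z = 0}).ncard = n → 0 < (-1) ^ n * (u a * u b) := by
  induction n using Nat.strong_induction_on with
  | _ n ih =>
  intro a b hab ha hb hfin hn
  match n, hn with
  | 0, hn =>
    rw [ncard_eq_zero hfin] at hn
    simpa using mul_pos_of_forall_ne_zero hu hab fun z hz hz0 => by
      rcases hz.1.eq_or_lt with rfl | haz
      · exact ha hz0
      rcases hz.2.eq_or_lt with rfl | hzb
      · exact hb hz0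
      exact hn.subset ⟨⟨haz, hzb⟩, hz0⟩
  | 1, hn =>
    obtain ⟨m, hm⟩ := ncard_eq_one.1 hn
    simpa using mul_neg_of_zeros_eq_singleton hu hext ha hb hm
  | n + 2, hn =>
    obtain ⟨z₁, hz₁, z₂, hz₂, hz₁₂⟩ : ∃ z₁ ∈ Ioo a b ∩ {z | u z = 0},
        ∃ z₂ ∈ Ioo a b ∩ {z | u z = 0}, z₁ < z₂ := by
      obtain ⟨x, y, hx, hy, hxy⟩ := (one_lt_ncard_iff hfin).1 (by omega)
      rcases hxy.lt_or_gt with h | h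
      exacts [⟨x, hx, y, hy, h⟩, ⟨y, hy, x, hx, h⟩]
    -- split `(a, b)` at a non-zero `c` between two zeros: parities add, signs multiply
    obtain ⟨c, ⟨hz₁c, hcz₂⟩, hcZ⟩ := ((Ioo_infinite hz₁₂).sdiff hfin).nonempty
    have hac : a < c := hz₁.1.1.trans hz₁c
    have hcb : c < b := hcz₂.trans hz₂.1.2
    have hc : u c ≠ 0 := fun h => hcZ ⟨⟨hac, hcb⟩, h⟩
    have hfin₁ : (Ioo a c ∩ {z | u z = 0}).Finite :=
      hfin.subset (inter_subset_inter_left _ (Ioo_subset_Ioo_right hcb.le))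
    have hfin₂ : (Ioo c b ∩ {z | u z = 0}).Finite :=
      hfin.subset (inter_subset_inter_left _ (Ioo_subset_Ioo_left hac.le))
    have hpos₁ : 0 < (Ioo a c ∩ {z | u z = 0}).ncard :=
      (ncard_pos hfin₁).2 ⟨z₁, ⟨hz₁.1.1, hz₁c⟩, hz₁.2⟩
    have hpos₂ : 0 < (Ioo c b ∩ {z | u z = 0}).ncard :=
      (ncard_pos hfin₂).2 ⟨z₂, ⟨hcz₂, hz₂.1.2⟩, hz₂.2⟩
    have hsum := ncard_inter_Ioo_add_ncard_inter_Ioo hac hcb (s := {z | u z = 0}) hc hfin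
    rw [hn] at hsum
    have ih₁ := ih _ (by omega) a c hac.le ha hc hfin₁ rfl
    have ih₂ := ih _ (by omega) c b hcb.le hc hb hfin₂ rfl
    have : 0 < (-1) ^ (n + 2) * (u a * u b) * (u c * u c) := by
      rw [← hsum, pow_add]
      exact (mul_pos ih₁ ih₂).trans_eq (by ring)
    exact pos_of_mul_pos_left this (mul_self_nonneg _)

theorem bddBelow_zeros_of_bddBelow_neg {u : ℝ → ℝ} (hext : ∀ z, u z = 0 → ¬IsLocalExtr u z)
    (h : BddBelow {x | u x < 0}) : BddBelow {x | u x = 0} := by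
  obtain ⟨b, hb⟩ := h
  refine ⟨b, fun z hz => not_lt.1 fun hzb => hext z hz (IsMinFilter.isExtr ?_)⟩
  filter_upwards [Iio_mem_nhds hzb] with y hy
  exact hz.trans_le (not_lt.1 fun hy' => (hb hy').not_gt hy)

theorem bddAbove_zeros_of_bddAbove_pos {u : ℝ → ℝ} (hext : ∀ z, u z = 0 → ¬IsLocalExtr u z)
    (h : BddAbove {x | 0 < u x}) : BddAbove {x | u x = 0} := by
  obtain ⟨b, hb⟩ := h
  refine ⟨b, fun z hz => not_lt.1 fun hbz => hext z hz (IsMaxFilter.isExtr ?_)⟩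
  filter_upwards [Ioi_mem_nhds hbz] with y hy
  exact (not_lt.1 fun hy' => (hb hy').not_gt hy).trans_eq hz.symm

theorem exists_bound_of_continuous_of_periodic {f : ℝ → ℝ → ℝ} (hf : Continuous (uncurry f))
    {L : ℝ} (hL : 0 < L) (hper : ∀ u x, f u (x + L) = f u x) (R : ℝ) :
    ∃ B, ∀ u x, |u| ≤ R → |f u x| ≤ B := by
  obtain ⟨B, hB⟩ := ((isCompact_Icc (a := -R) (b := R)).prod (isCompact_Icc (a := 0) (b := L)))
    |>.exists_bound_of_continuousOn hf.continuousOn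
  refine ⟨B, fun u x hu => ?_⟩
  obtain ⟨y, hy, hxy⟩ := (show Periodic (f u) L from hper u).exists_mem_Ico₀ hL x
  rw [hxy]
  exact hB (u, y) ⟨abs_le.1 hu, Ico_subset_Icc_self hy⟩

theorem exists_abs_eta_le {f₁ f₂ : ℝ → ℝ → ℝ} (hf₁ : Continuous (uncurry f₁))
    (hf₂ : Continuous (uncurry f₂)) {L : ℝ} (hL : 0 < L) (hper₁ : ∀ u x, f₁ u (x + L) = f₁ u x)
    (hper₂ : ∀ u x, f₂ u (x + L) = f₂ u x) (d α M : ℝ) :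
    ∃ C, ∀ z x, |z| ≤ M → |eta d α f₁ f₂ z x| ≤ C * |z| := by
  obtain ⟨B₁, hB₁⟩ := exists_bound_of_continuous_of_periodic hf₁ hL hper₁ (M / |α|)
  obtain ⟨B₂, hB₂⟩ := exists_bound_of_continuous_of_periodic hf₂ hL hper₂ (M / |d|)
  refine ⟨B₁ + |1 / d| * B₂, fun z x hz => ?_⟩
  have h₁ : |f₁ (z / α) x| ≤ B₁ := hB₁ _ _ (by rw [abs_div]; gcongr)
  have h₂ : |f₂ (-z / d) x| ≤ B₂ := hB₂ _ _ (by rw [abs_div, abs_neg]; gcongr)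
  have hmax : |max z 0| ≤ |z| := by rcases le_total z 0 with h | h <;> simp [h]
  have hmin : |min z 0| ≤ |z| := by rcases le_total z 0 with h | h <;> simp [h]
  calc |eta d α f₁ f₂ z x|
      ≤ |f₁ (z / α) x| * |max z 0| + |1 / d| * (|f₂ (-z / d) x| * |min z 0|) := by
        rw [eta]
        refine (abs_sub _ _).trans_eq ?_
        rw [abs_mul, mul_assoc, abs_mul, abs_mul, abs_neg]
    _ ≤ B₁ * |z| + |1 / d| * (B₂ * |z|) := by
        gcongr
        · exact (abs_nonneg _).trans h₁
        · exact (abs_nonneg _).trans h₂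
    _ = (B₁ + |1 / d| * B₂) * |z| := by ring

namespace SegEquilibrium

variable {L d α : ℝ} {f₁ f₂ : ℝ → ℝ → ℝ} {e : ℝ → ℝ}

theorem differentiable (he : SegEquilibrium L d α f₁ f₂ e) : Differentiable ℝ e :=
  he.smooth.differentiable (by norm_num)

theorem differentiable_deriv (he : SegEquilibrium L d α f₁ f₂ e) :
    Differentiable ℝ (deriv e) :=
  (he.smooth.iterate_deriv' 1 1).differentiable one_ne_zero

theorem deriv_ne_zero_of_eq_zero (he : SegEquilibrium L d α f₁ f₂ e) (hL : 0 < L)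
    {a₁ a₂ : ℝ} (hf₁ : Admissible L f₁ a₁) (hf₂ : Admissible L f₂ a₂) {z : ℝ} (hz : e z = 0) :
    deriv e z ≠ 0 := by
  intro hz'
  obtain ⟨M, hM⟩ := he.bdd
  obtain ⟨C, hC⟩ := exists_abs_eta_le hf₁.smooth.continuous hf₂.smooth.continuous hL
    hf₁.periodic hf₂.periodic d α M
  have bound : ∀ x, |deriv (deriv e) x| ≤ C * |e x| := fun x => by
    rw [← abs_neg, he.ode x]
    exact hC _ _ (hM x)
  obtain ⟨p, hp⟩ := he.pos
  exact hp.ne' (eq_zero_of_abs_deriv_deriv_le he.differentiable he.differentiable_deriv bound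
    hz hz' p)

theorem add_nat_mul_le (he : SegEquilibrium L d α f₁ f₂ e) (x : ℝ) (k : ℕ) :
    e (x + k * L) ≤ e x := by
  simpa using he.mono x (Nat.zero_le k)

theorem exists_lt_pos (he : SegEquilibrium L d α f₁ f₂ e) (hL : 0 < L) (w : ℝ) :
    ∃ v < w, 0 < e v := by
  obtain ⟨p, hp⟩ := he.pos
  obtain ⟨k, hk⟩ := exists_nat_gt ((p - w) / L)
  rw [div_lt_iff₀ hL] at hk
  refine ⟨p - k * L, by linarith, hp.trans_le ?_⟩
  simpa using he.add_nat_mul_le (p - k * L) k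

theorem exists_gt_neg (he : SegEquilibrium L d α f₁ f₂ e) (hL : 0 < L) (w : ℝ) :
    ∃ v > w, e v < 0 := by
  obtain ⟨q, hq⟩ := he.neg
  obtain ⟨k, hk⟩ := exists_nat_gt ((w - q) / L)
  rw [div_lt_iff₀ hL] at hk
  exact ⟨q + k * L, by linarith, (he.add_nat_mul_le q k).trans_lt hq⟩

theorem zeros_nonempty (he : SegEquilibrium L d α f₁ f₂ e) : {x | e x = 0}.Nonempty := by
  obtain ⟨p, hp⟩ := he.pos
  obtain ⟨q, hq⟩ := he.neg
  exact intermediate_value_univ q p he.smooth.continuous ⟨hq.le, hp.le⟩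

end SegEquilibrium

theorem seg_equilibrium_zero_set_general
    (L d α a₁ a₂ : ℝ) (hL : 0 < L)
    (f₁ f₂ : ℝ → ℝ → ℝ) (hf₁ : Admissible L f₁ a₁) (hf₂ : Admissible L f₂ a₂)
    (e : ℝ → ℝ) (he : SegEquilibrium L d α f₁ f₂ e) :
    (∀ x ∈ {y : ℝ | e y = 0}, ∃ ε > 0, ∀ y ∈ {y : ℝ | e y = 0},
      |y - x| < ε → y = x) ∧
    (∀ hfin : Set.Finite {y : ℝ | e y = 0}, Odd hfin.toFinset.card) ∧
    ((∃ m, IsLeast {y : ℝ | e y = 0} m) ∨ (∃ m, IsGreatest {y : ℝ | e y = 0} m)) := by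
  have hsimple : ∀ z, e z = 0 → deriv e z ≠ 0 := fun z =>
    he.deriv_ne_zero_of_eq_zero hL hf₁ hf₂
  have hext : ∀ z, e z = 0 → ¬IsLocalExtr e z := fun z hz h => hsimple z hz h.deriv_eq_zero
  have hcont : Continuous e := he.smooth.continuous
  have hclosed : IsClosed {y | e y = 0} := isClosed_eq hcont continuous_const
  refine ⟨fun x hx => ?_, fun hfin => ?_, ?_⟩
  · obtain ⟨ε, hε, H⟩ :=
      (he.differentiable x).hasDerivAt.exists_forall_eq_imp_eq (hsimple x hx)
    exact ⟨ε, hε, fun y hy => H y (hy.trans hx.symm)⟩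
  · obtain ⟨l, hl⟩ := hfin.bddBelow
    obtain ⟨r, hr⟩ := hfin.bddAbove
    obtain ⟨a, hal, ha⟩ := he.exists_lt_pos hL l
    obtain ⟨b, hrb, hb⟩ := he.exists_gt_neg hL r
    have hZ : Ioo a b ∩ {y | e y = 0} = {y | e y = 0} :=
      inter_eq_right.2 fun y hy => ⟨hal.trans_le (hl hy), (hr hy).trans_lt hrb⟩
    have hab : a ≤ b := by
      obtain ⟨z, hz⟩ := he.zeros_nonempty
      linarith [hl hz, hr hz]
    have hsign := neg_one_pow_ncard_zeros_mul_pos hcont hext _ a b hab ha.ne' hb.ne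
      (by rwa [hZ]) (by rw [hZ, ncard_eq_toFinset_card _ hfin])
    refine (Nat.even_or_odd _).resolve_left fun heven => ?_
    rw [heven.neg_one_pow, one_mul] at hsign
    nlinarith
  · rcases he.tail with h | h
    · exact .inl ⟨_, hclosed.isLeast_csInf he.zeros_nonempty
        (bddBelow_zeros_of_bddBelow_neg hext h)⟩
    · exact .inr ⟨_, hclosed.isGreatest_csSup he.zeros_nonempty
        (bddAbove_zeros_of_bddAbove_pos hext h)⟩

/-- the zero set of a segregated stationary equilibrium is discrete,
has odd cardinality when finite, and admits a minimum or a maximum. -/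
theorem seg_equilibrium_zero_set
    (L d α a₁ a₂ : ℝ) (hL : 0 < L) (hd : 0 < d) (hα : 0 < α)
    (f₁ f₂ : ℝ → ℝ → ℝ) (hf₁ : Admissible L f₁ a₁) (hf₂ : Admissible L f₂ a₂)
    (e : ℝ → ℝ) (he : SegEquilibrium L d α f₁ f₂ e) :
    (∀ x ∈ {y : ℝ | e y = 0}, ∃ ε > 0, ∀ y ∈ {y : ℝ | e y = 0},
      |y - x| < ε → y = x) ∧
    (∀ hfin : Set.Finite {y : ℝ | e y = 0}, Odd hfin.toFinset.card) ∧
    ((∃ m, IsLeast {y : ℝ | e y = 0} m) ∨ (∃ m, IsGreatest {y : ℝ | e y = 0} m)) :=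
  seg_equilibrium_zero_set_general L d α a₁ a₂ hL f₁ f₂ hf₁ hf₂ e he
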